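/- arXiv:1707.04867 — 4 statements merged into one kernel-verified Lean document; each statement's English description precedes it below -/
import Mathlib

section
/- Let G be the directed graph with vertex set {s, v_1, …, v_{n−1}}, edges (s,v_1) and (v_i, v_j) for all 1 ≤ i < j ≤ n−1, and rational weights w(s,v_1) = n, w(v_i,v_{i+1}) = 0, and w(v_i,v_j) = 1 − (i+j)/(2n) for j > i+1. Then for each edge (v_i,v_j) with j ≠ i+1, the increment function adding 1 to the edge (v_i,v_{i+1}) and 0 elsewhere makes the path s, v_1, v_2, …, v_i, v_j the unique minimum-weight s-v_j path in the updated graph. -/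
variable {V : Type*}

/-- A directed walk in the digraph with edge set `E`, from `s` to `t`,
given as the list of visited vertices. -/
def IsWalk (E : Set (V × V)) (s t : V) (p : List V) : Prop :=
  p.head? = some s ∧ p.getLast? = some t ∧ p.Chain' (fun a b => (a, b) ∈ E)

/-- The list of edges traversed by a walk. -/
def edgesOf (p : List V) : List (V × V) := p.zip p.tail

/-- Total weight of a walk. -/
def wt {α : Type*} [AddCommMonoid α] (w : V × V → α) (p : List V) : α :=
  ((edgesOf p).map w).sum

/-- `d` is the (attained) minimum weight of a directed `s`-`t` walk. -/
def IsDist {α : Type*} [AddCommMonoid α] [Preorder α] (E : Set (V × V)) (w : V × V → α)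
    (s t : V) (d : α) : Prop :=
  (∃ p, IsWalk E s t p ∧ wt w p = d) ∧ ∀ p, IsWalk E s t p → d ≤ wt w p

/-- Edge set of the lower-bound graph: vertex `0` is `s`, vertices `1,…,n-1`
are `v_1,…,v_{n-1}`; edges are `(s,v_1)` and `(v_i,v_j)` for `1 ≤ i < j ≤ n-1`. -/
def E10 (n : ℕ) : Set (ℕ × ℕ) :=
  {p | (p.1 = 0 ∧ p.2 = 1) ∨ (1 ≤ p.1 ∧ p.1 < p.2 ∧ p.2 ≤ n - 1)}

/-- Weights: `w(s,v_1) = n`, `w(v_i,v_{i+1}) = 0`, `w(v_i,v_j) = 1 - (i+j)/(2n)`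
for `j > i + 1`. -/
def w10 (n : ℕ) : ℕ × ℕ → ℚ := fun p =>
  if p.1 = 0 ∧ p.2 = 1 then (n : ℚ)
  else if p.2 = p.1 + 1 then 0
  else 1 - ((p.1 : ℚ) + (p.2 : ℚ)) / (2 * n)

namespace Help10

/-- The incremented weight function. -/
def c (n i : ℕ) : ℕ × ℕ → ℚ := fun p => w10 n p + if p = (i, i + 1) then 1 else 0

/-- Edge relation among the `v`-vertices. -/
def E' (n : ℕ) : ℕ → ℕ → Prop := fun x y => 1 ≤ x ∧ x < y ∧ y ≤ n - 1

lemma wt_cons (w : ℕ × ℕ → ℚ) (a b : ℕ) (l : List ℕ) :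
    wt w (a :: b :: l) = w (a, b) + wt w (b :: l) := by
  simp [wt, edgesOf]

lemma c_unit (n i a : ℕ) (ha : 1 ≤ a) (hai : a ≠ i) : c n i (a, a + 1) = 0 := by
  have h0 : a ≠ 0 := by omega
  simp [c, w10, h0, hai]

lemma c_ii (n i : ℕ) (hi : 1 ≤ i) : c n i (i, i + 1) = 1 := by
  have h0 : i ≠ 0 := by omega
  simp [c, w10, h0]

lemma c_jump (n i a b : ℕ) (ha : 1 ≤ a) (hb : b ≠ a + 1) :
    c n i (a, b) = 1 - ((a : ℚ) + b) / (2 * n) := by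
  have h1 : ¬(a = 0 ∧ b = 1) := by omega
  have h2 : ¬((a, b) = (i, i + 1)) := by
    simp only [Prod.mk.injEq, not_and]
    intro h h'; omega
  simp [c, w10, h1, hb, h2]

lemma nq_pos (n : ℕ) (hn : 4 ≤ n) : (0 : ℚ) < 2 * n := by
  have : (4 : ℚ) ≤ n := by exact_mod_cast hn
  linarith

lemma c_jump_pos (n i a b : ℕ) (hn : 4 ≤ n) (h : E' n a b) (hb : b ≠ a + 1) :
    0 < c n i (a, b) := by
  rw [c_jump n i a b h.1 hb]
  have hab : a + b < 2 * n := by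
    obtain ⟨h1, h2, h3⟩ := h; omega
  have habq : ((a : ℚ) + b) < 2 * n := by exact_mod_cast hab
  have h0 : ((a : ℚ) + b) / (2 * n) < 1 := (div_lt_one (nq_pos n hn)).2 habq
  linarith

lemma c_nonneg (n i a b : ℕ) (hn : 4 ≤ n) (h : E' n a b) : 0 ≤ c n i (a, b) := by
  by_cases hb : b = a + 1
  · subst hb
    by_cases hai : a = i
    · have hai2 : i = a := hai.symm
      subst hai2; rw [c_ii n i h.1]; norm_num
    · rw [c_unit n i a h.1 hai]
  · exact (c_jump_pos n i a b hn h hb).le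

lemma wt_nonneg (n i : ℕ) (hn : 4 ≤ n) :
    ∀ l : List ℕ, l.Chain' (E' n) → 0 ≤ wt (c n i) l
  | [] , _ => le_of_eq rfl
  | [_], _ => le_of_eq rfl
  | a :: b :: t, h => by
      rw [wt_cons]
      have h' := List.isChain_cons_cons.mp h
      have h1 := wt_nonneg n i hn (b :: t) h'.2
      have h2 := c_nonneg n i a b hn h'.1
      linarith

lemma head_le_last (n : ℕ) :
    ∀ (l : List ℕ) (a b : ℕ), l.Chain' (E' n) → l.head? = some a →
      l.getLast? = some b → a ≤ b
  | [], a, b, _, h, _ => by simp at h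
  | [x], a, b, _, h1, h2 => by
      simp at h1 h2; omega
  | x :: y :: t, a, b, h, h1, h2 => by
      simp at h1; subst h1
      rw [List.getLast?_cons_cons] at h2
      have h' := List.isChain_cons_cons.mp h
      have := head_le_last n (y :: t) y b h'.2 rfl h2
      have := h'.1.2.1
      omega

lemma L0 (n i j : ℕ) (hn : 4 ≤ n) (hi : 1 ≤ i) (hij : i < j) (hj : j ≤ n - 1)
    (hne : j ≠ i + 1) :
    ∀ (l : List ℕ) (a : ℕ), l.Chain' (E' n) → l.head? = some a →
      l.getLast? = some j → a ≤ i →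
      1 - ((i : ℚ) + j) / (2 * n) ≤ wt (c n i) l
  | [], a, _, h1, _, _ => by simp at h1
  | [x], a, _, h1, h2, hai => by simp at h1 h2; omega
  | x :: b :: t, a, hc, h1, h2, hai => by
      simp at h1; subst h1
      rw [List.getLast?_cons_cons] at h2
      have h' := List.isChain_cons_cons.mp hc
      rw [wt_cons]
      by_cases hbi : b ≤ i
      · have hIH := L0 n i j hn hi hij hj hne (b :: t) b h'.2 rfl h2 hbi
        have := c_nonneg n i x b hn h'.1
        linarith
      · have hbj : b ≤ j := head_le_last n (b :: t) b j h'.2 rfl h2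
        have hwt := wt_nonneg n i hn (b :: t) h'.2
        by_cases hba : b = x + 1
        · have hai' : i = x := by omega
          subst hai'; subst hba
          rw [c_ii n i hi]
          have hpos : (0:ℚ) ≤ ((i : ℚ) + j) / (2 * n) := by
            apply div_nonneg _ (nq_pos n hn).le
            positivity
          linarith
        · rw [c_jump n i x b h'.1.1 hba]
          have hle : ((x : ℚ) + b) ≤ (i : ℚ) + j := by
            have : x + b ≤ i + j := by omega
            exact_mod_cast this
          have := div_le_div_of_nonneg_right hle (nq_pos n hn).le
          linarith

lemma single_of_chain (n : ℕ) (j : ℕ) :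
    ∀ (t : List ℕ), (j :: t).Chain' (E' n) → (j :: t).getLast? = some j → t = []
  | [], _, _ => rfl
  | x :: t', hc, h2 => by
      exfalso
      rw [List.getLast?_cons_cons] at h2
      have h' := List.isChain_cons_cons.mp hc
      have := head_le_last n (x :: t') x j h'.2 rfl h2
      have := h'.1.2.1
      omega

lemma L1 (n i j : ℕ) (hn : 4 ≤ n) (hi : 1 ≤ i) (hij : i < j) (hj : j ≤ n - 1)
    (hne : j ≠ i + 1) :
    ∀ (l : List ℕ) (a : ℕ), l.Chain' (E' n) → l.head? = some a →
      l.getLast? = some j → a ≤ i → 1 ≤ a →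
      l ≠ List.range' a (i + 1 - a) ++ [j] →
      1 - ((i : ℚ) + j) / (2 * n) < wt (c n i) l
  | [], a, _, h1, _, _, _, _ => by simp at h1
  | [x], a, _, h1, h2, hai, _, _ => by simp at h1 h2; omega
  | x :: b :: t, a, hc, h1, h2, hai, ha1, hl => by
      simp at h1; subst h1
      rw [List.getLast?_cons_cons] at h2
      have h' := List.isChain_cons_cons.mp hc
      rw [wt_cons]
      by_cases hbi : b ≤ i
      · by_cases hba : b = x + 1
        · have hanei : x ≠ i := by omega
          have hrec : (b :: t) ≠ List.range' b (i + 1 - b) ++ [j] := by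
            intro h
            apply hl
            have hk : i + 1 - x = (i + 1 - b) + 1 := by omega
            rw [hk, List.range'_succ]
            simp only [List.cons_append]
            rw [← hba, ← h]
          have hIH := L1 n i j hn hi hij hj hne (b :: t) b h'.2 rfl h2 hbi
            (by omega) hrec
          rw [hba, c_unit n i x ha1 hanei]
          rw [hba] at hIH
          linarith
        · have := c_jump_pos n i x b hn h'.1 hba
          have hIH := L0 n i j hn hi hij hj hne (b :: t) b h'.2 rfl h2 hbi
          linarith
      · have hbj : b ≤ j := head_le_last n (b :: t) b j h'.2 rfl h2
        have hwt := wt_nonneg n i hn (b :: t) h'.2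
        by_cases hba : b = x + 1
        · have hai' : i = x := by omega
          subst hai'; subst hba
          rw [c_ii n i hi]
          have hpos : (0:ℚ) < ((i : ℚ) + j) / (2 * n) := by
            apply div_pos _ (nq_pos n hn)
            have : (0:ℕ) < i + j := by omega
            exact_mod_cast this
          linarith
        · by_cases hab : x = i ∧ b = j
          · exfalso
            obtain ⟨rfl, rfl⟩ := hab
            have ht : t = [] := single_of_chain n b t h'.2 h2
            subst ht
            apply hl
            have hone : x + 1 - x = 1 := by omega
            rw [hone, List.range'_one]
            rfl
          · rw [c_jump n i x b h'.1.1 hba]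
            have hlt : ((x : ℚ) + b) < (i : ℚ) + j := by
              have : x + b < i + j := by omega
              exact_mod_cast this
            have := div_lt_div_of_pos_right hlt (nq_pos n hn)
            linarith

lemma wt_tail (n i j : ℕ) (hn : 4 ≤ n) (hi : 1 ≤ i) (hij : i < j) (hne : j ≠ i + 1) :
    ∀ (k a : ℕ), a + k = i → 1 ≤ a →
      wt (c n i) (List.range' a (k + 1) ++ [j]) = 1 - ((i : ℚ) + j) / (2 * n)
  | 0, a, h, ha => by
      have h9 : i = a := by omega
      subst h9
      rw [List.range'_one]
      have h1 : wt (c n i) [i, j] = c n i (i, j) + wt (c n i) [j] := wt_cons _ i j []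
      show wt (c n i) [i, j] = _
      rw [h1, c_jump n i i j hi hne]
      show _ - _ + 0 = _
      ring
  | k + 1, a, h, ha => by
      rw [List.range'_succ, List.range'_succ]
      simp only [List.cons_append]
      rw [wt_cons, c_unit n i a ha (by omega), ← List.cons_append, ← List.range'_succ]
      rw [wt_tail n i j hn hi hij hne k (a + 1) (by omega) (by omega)]
      ring

lemma chain_tail (n i j : ℕ) (hi : 1 ≤ i) (hij : i < j) (hj : j ≤ n - 1) :
    ∀ (k a : ℕ), a + k = i → 1 ≤ a →
      List.Chain' (E' n) (List.range' a (k + 1) ++ [j])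
  | 0, a, h, ha => by
      have h9 : i = a := by omega
      subst h9
      rw [List.range'_one]
      exact List.isChain_cons_cons.mpr ⟨⟨hi, hij, hj⟩, List.isChain_singleton j⟩
  | k + 1, a, h, ha => by
      rw [List.range'_succ]
      simp only [List.cons_append]
      refine List.isChain_cons.mpr ⟨?_, ?_⟩
      · intro y hy
        rw [List.range'_succ] at hy
        simp at hy
        subst hy
        exact ⟨ha, by omega, by omega⟩
      · exact chain_tail n i j hi hij hj k (a + 1) (by omega) (by omega)

lemma chain_E' (n : ℕ) :
    ∀ (l : List ℕ) (a : ℕ), List.Chain' (fun x y => (x, y) ∈ E10 n) (a :: l) →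
      1 ≤ a → List.Chain' (E' n) (a :: l)
  | [], _, _, _ => List.isChain_singleton _
  | x :: t, a, h, ha => by
      have h' := List.isChain_cons_cons.mp h
      have hax : E' n a x := by
        rcases h'.1 with h1 | h2
        · exfalso; simp [E10] at h1; omega
        · exact h2
      exact List.isChain_cons_cons.mpr ⟨hax, chain_E' n t x h'.2 (by have := hax.2.1; omega)⟩

end Help10

/-- Incrementing the weight of edge `(v_i,v_{i+1})` by `1` makes the path
`s, v_1, …, v_i, v_j` the unique minimum-weight `s`-`v_j` path. -/
theorem stmt10 (n i j : ℕ) (hn : 4 ≤ n) (hi : 1 ≤ i) (hij : i < j) (hj : j ≤ n - 1)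
    (hne : j ≠ i + 1)
    (w' : ℕ × ℕ → ℚ)
    (hw' : w' = fun p => w10 n p + if p = (i, i + 1) then 1 else 0)
    (P : List ℕ) (hP : P = List.range (i + 1) ++ [j]) :
    IsWalk (E10 n) 0 j P ∧
    ∀ q, IsWalk (E10 n) 0 j q → q ≠ P → wt w' P < wt w' q := by
  subst hw' hP
  have hwc : (fun p => w10 n p + if p = (i, i + 1) then (1:ℚ) else 0) = Help10.c n i := rfl
  rw [hwc]
  have hPe : List.range (i + 1) ++ [j] = 0 :: (List.range' 1 i ++ [j]) := by
    rw [List.range_eq_range', List.range'_succ]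
    simp
  rw [hPe]
  have hfix : (i - 1) + 1 = i := by omega
  have htail_eq : List.range' 1 i ++ [j] = 1 :: (List.range' 2 (i - 1) ++ [j]) := by
    conv_lhs => rw [show i = (i - 1) + 1 from by omega]
    rw [List.range'_succ]
    simp
  have hwtail : wt (Help10.c n i) (List.range' 1 i ++ [j])
      = 1 - ((i : ℚ) + j) / (2 * n) := by
    have := Help10.wt_tail n i j hn hi hij hne (i - 1) 1 (by omega) le_rfl
    rwa [hfix] at this
  have hchainP : List.Chain' (Help10.E' n) (List.range' 1 i ++ [j]) := by
    have := Help10.chain_tail n i j hi hij hj (i - 1) 1 (by omega) le_rfl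
    rwa [hfix] at this
  have hc01 : Help10.c n i (0, 1) = (n : ℚ) := by
    have h2 : ¬((0, 1) = (i, i + 1)) := by
      simp only [Prod.mk.injEq, not_and]
      intro h; omega
    simp [Help10.c, w10, h2]
  have hwP : wt (Help10.c n i) (0 :: (List.range' 1 i ++ [j]))
      = (n : ℚ) + (1 - ((i : ℚ) + j) / (2 * n)) := by
    rw [htail_eq, Help10.wt_cons, ← htail_eq, hwtail, hc01]
  constructor
  · refine ⟨rfl, ?_, ?_⟩
    · rw [show (0 :: (List.range' 1 i ++ [j])) = (0 :: List.range' 1 i) ++ [j] by simp,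
        List.getLast?_concat]
    · refine List.isChain_cons.mpr ⟨?_, ?_⟩
      · intro y hy
        rw [htail_eq] at hy
        simp at hy
        subst hy
        exact Or.inl ⟨rfl, rfl⟩
      · exact hchainP.imp (fun a b h => Or.inr h)
  · intro q hq hqP
    obtain ⟨hq1, hq2, hq3⟩ := hq
    cases q with
    | nil => simp at hq1
    | cons x t =>
      simp at hq1; subst hq1
      cases t with
      | nil => simp at hq2; omega
      | cons b t' =>
        rw [List.getLast?_cons_cons] at hq2
        have h' := List.isChain_cons_cons.mp hq3
        have hb1 : b = 1 := by
          rcases h'.1 with h1 | h2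
          · exact h1.2
          · exact absurd h2.1 (by omega)
        subst hb1
        have hchain : List.Chain' (Help10.E' n) (1 :: t') :=
          Help10.chain_E' n t' 1 h'.2 le_rfl
        have hne' : (1 :: t') ≠ List.range' 1 (i + 1 - 1) ++ [j] := by
          intro h
          rw [show i + 1 - 1 = i from by omega] at h
          exact hqP (by rw [h])
        have hlt := Help10.L1 n i j hn hi hij hj hne (1 :: t') 1 hchain rfl hq2 hi
          le_rfl hne'
        rw [hwP, Help10.wt_cons, hc01]
        linarith
end

section
/- Let G be the directed graph with vertex set {s, t} ∪ A ∪ B, edges s→a for a ∈ A, a→b for all a ∈ A, b ∈ B, and b→t for b ∈ B, all of weight 2. For any edge e of G, decreasing the weight of e by 1 (leaving other weights unchanged) makes every s-t path through e have weight 5 while every s-t path avoiding e has weight 6; hence every edge of G lies on the unique-distance-realizing set, so any subgraph preserving s-t distance under all single unit decrements must contain all |A| + |A|·|B| + |B| edges. -/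
variable {V : Type*}

/-! Every `s`-`t` walk in the three-layer graph is `s → a → b → t`, so it has three distinct
edges; lowering the weight of one edge from `2` to `1` costs `6 - 1 = 5` on a walk that uses it
and `6` on one that does not. Hence a subgraph realizing weight `5` for every decremented edge
`e` contains a walk through `e`, and in particular contains `e`. -/

theorem rel_of_mem_edgesOf {R : V → V → Prop} :
    ∀ {p : List V}, p.IsChain R → ∀ {x y : V}, (x, y) ∈ edgesOf p → R x y
  | [], _, _, _, h | [_], _, _, _, h => by simp [edgesOf] at h
  | a :: b :: l, hp, x, y, h => by
    rw [show edgesOf (a :: b :: l) = (a, b) :: edgesOf (b :: l) from rfl, List.mem_cons] at h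
    rw [List.isChain_cons_cons] at hp
    rcases h with h | h
    · obtain ⟨rfl, rfl⟩ := Prod.mk.inj h
      exact hp.1
    · exact rel_of_mem_edgesOf hp.2 h

namespace IsWalk

variable {E E' : Set (V × V)} {s t : V} {p : List V}

theorem mono (hp : IsWalk E s t p) (h : E ⊆ E') : IsWalk E' s t p :=
  ⟨hp.1, hp.2.1, hp.2.2.imp fun _ _ hab => h hab⟩

theorem mem_of_mem_edgesOf (hp : IsWalk E s t p) {e : V × V} (he : e ∈ edgesOf p) : e ∈ E :=
  rel_of_mem_edgesOf (R := fun a b => (a, b) ∈ E) hp.2.2 he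

end IsWalk

def threeLayerEdges (s t : V) (A B : Set V) : Set (V × V) :=
  {p | (p.1 = s ∧ p.2 ∈ A) ∨ (p.1 ∈ A ∧ p.2 ∈ B) ∨ (p.1 ∈ B ∧ p.2 = t)}

section ThreeLayer

variable {s t : V} {A B : Set V}

theorem mem_of_mk_source_mem_threeLayerEdges (hsA : s ∉ A) (hsB : s ∉ B) {y : V}
    (h : (s, y) ∈ threeLayerEdges s t A B) : y ∈ A := by
  rcases h with ⟨-, h⟩ | ⟨h, -⟩ | ⟨h, -⟩
  exacts [h, absurd h hsA, absurd h hsB]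

theorem mem_of_mk_mem_threeLayerEdges_of_mem_left (hsA : s ∉ A) (hAB : Disjoint A B)
    {a y : V} (ha : a ∈ A) (h : (a, y) ∈ threeLayerEdges s t A B) : y ∈ B := by
  rcases h with ⟨rfl, -⟩ | ⟨-, h⟩ | ⟨h, -⟩
  exacts [absurd ha hsA, h, absurd h (hAB.notMem_of_mem_left ha)]

theorem eq_of_mk_mem_threeLayerEdges_of_mem_right (hsB : s ∉ B) (hAB : Disjoint A B)
    {b y : V} (hb : b ∈ B) (h : (b, y) ∈ threeLayerEdges s t A B) : y = t := by
  rcases h with ⟨rfl, -⟩ | ⟨h, -⟩ | ⟨-, h⟩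
  exacts [absurd hb hsB, absurd hb (hAB.notMem_of_mem_left h), h]

theorem mk_target_notMem_threeLayerEdges (hst : s ≠ t) (htA : t ∉ A) (htB : t ∉ B) (y : V) :
    (t, y) ∉ threeLayerEdges s t A B := by
  rintro (⟨h, -⟩ | ⟨h, -⟩ | ⟨h, -⟩)
  exacts [hst h.symm, htA h, htB h]

theorem eq_of_isWalk_threeLayerEdges (hst : s ≠ t) (hsA : s ∉ A) (hsB : s ∉ B) (htA : t ∉ A)
    (htB : t ∉ B) (hAB : Disjoint A B) {p : List V}
    (hp : IsWalk (threeLayerEdges s t A B) s t p) : ∃ a ∈ A, ∃ b ∈ B, p = [s, a, b, t] := by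
  obtain ⟨hhead, hlast, hchain⟩ := hp
  obtain ⟨q, rfl⟩ : ∃ q, p = s :: q := by
    cases p <;> simp_all
  rcases q with _ | ⟨a, q⟩
  · exact absurd (by simpa using hlast) hst
  rw [List.Chain', List.isChain_cons_cons] at hchain
  have ha := mem_of_mk_source_mem_threeLayerEdges hsA hsB hchain.1
  rcases q with _ | ⟨b, q⟩
  · exact absurd ((by simpa using hlast) ▸ ha) htA
  rw [List.isChain_cons_cons] at hchain
  have hb := mem_of_mk_mem_threeLayerEdges_of_mem_left hsA hAB ha hchain.2.1
  rcases q with _ | ⟨c, q⟩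
  · exact absurd ((by simpa using hlast) ▸ hb) htB
  rw [List.isChain_cons_cons] at hchain
  obtain rfl := eq_of_mk_mem_threeLayerEdges_of_mem_right hsB hAB hb hchain.2.2.1
  rcases q with _ | ⟨u, q⟩
  · exact ⟨a, ha, b, hb, rfl⟩
  · rw [List.isChain_cons_cons] at hchain
    exact absurd hchain.2.2.2.1 (mk_target_notMem_threeLayerEdges hst htA htB u)

theorem wt_ite_eq_of_isWalk_threeLayerEdges [DecidableEq V] (hst : s ≠ t) (hsA : s ∉ A)
    (hsB : s ∉ B) (htA : t ∉ A) (htB : t ∉ B) (hAB : Disjoint A B) {p : List V}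
    (hp : IsWalk (threeLayerEdges s t A B) s t p) (e : V × V) :
    wt (fun f => if f = e then (1 : ℚ) else 2) p = if e ∈ edgesOf p then 5 else 6 := by
  obtain ⟨a, ha, b, hb, rfl⟩ := eq_of_isWalk_threeLayerEdges hst hsA hsB htA htB hAB hp
  have hsa : s ≠ a := fun h => hsA (h ▸ ha)
  have hab : a ≠ b := fun h => hAB.notMem_of_mem_left ha (h ▸ hb)
  have hsb : s ≠ b := fun h => hsB (h ▸ hb)
  have hnodup : (edgesOf [s, a, b, t]).Nodup := by
    simp [edgesOf, hsa, hab, hsb]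
  rw [wt, List.sum_map_ite_eq]
  split_ifs with he
  -- `List.sum_map_ite_eq` counts with the `BEq` instance derived from `DecidableEq`.
  · rw [@List.count_eq_one_of_mem _ instBEqOfDecidableEq _ _ _ hnodup he]
    norm_num [edgesOf]
  · rw [@List.count_eq_zero_of_not_mem _ instBEqOfDecidableEq _ _ _ he]
    norm_num [edgesOf]

end ThreeLayer

theorem stmt12_general [DecidableEq V] (s t : V) (A B : Finset V)
    (hst : s ≠ t) (hsA : s ∉ A) (hsB : s ∉ B) (htA : t ∉ A) (htB : t ∉ B)
    (hAB : Disjoint A B)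
    (E : Set (V × V))
    (hE : E = {p | (p.1 = s ∧ p.2 ∈ A) ∨ (p.1 ∈ A ∧ p.2 ∈ B) ∨ (p.1 ∈ B ∧ p.2 = t)})
    (wdec : V × V → V × V → ℚ)
    (hwdec : wdec = fun e f => if f = e then 1 else 2) :
    (∀ e ∈ E, ∀ p, IsWalk E s t p →
      (e ∈ edgesOf p → wt (wdec e) p = 5) ∧ (e ∉ edgesOf p → wt (wdec e) p = 6)) ∧
    (∀ E' ⊆ E, (∀ e ∈ E, ∃ p, IsWalk E' s t p ∧ wt (wdec e) p = 5) → E' = E) := by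
  subst hE hwdec
  have hweight : ∀ e p, IsWalk _ s t p →
      wt (fun f => if f = e then (1 : ℚ) else 2) p = if e ∈ edgesOf p then 5 else 6 :=
    fun e _ hp => wt_ite_eq_of_isWalk_threeLayerEdges hst hsA hsB htA htB
      (Finset.disjoint_coe.mpr hAB) hp e
  refine ⟨fun e _ p hp => ?_, fun E' hE' hwalks => hE'.antisymm fun e he => ?_⟩
  · rw [hweight e p hp]
    exact ⟨fun he => if_pos he, fun he => if_neg he⟩
  · obtain ⟨p, hp, hp5⟩ := hwalks e he
    have he : e ∈ edgesOf p := by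
      by_contra hne
      rw [hweight e p (hp.mono hE'), if_neg hne] at hp5
      norm_num at hp5
    exact hp.mem_of_mem_edgesOf he

/-- In the three-layer graph `s → A → B → t` with all weights `2`, decreasing
any single edge `e` by one makes every `s`-`t` path through `e` have weight `5`
and every other `s`-`t` path weight `6`; hence any subgraph preserving the
`s`-`t` distance under all single unit decrements must contain every edge. -/
theorem stmt12 [DecidableEq V] (s t : V) (A B : Finset V)
    (hA : A.Nonempty) (hB : B.Nonempty)
    (hst : s ≠ t) (hsA : s ∉ A) (hsB : s ∉ B) (htA : t ∉ A) (htB : t ∉ B)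
    (hAB : Disjoint A B)
    (E : Set (V × V))
    (hE : E = {p | (p.1 = s ∧ p.2 ∈ A) ∨ (p.1 ∈ A ∧ p.2 ∈ B) ∨ (p.1 ∈ B ∧ p.2 = t)})
    (wdec : V × V → V × V → ℚ)
    (hwdec : wdec = fun e f => if f = e then 1 else 2) :
    (∀ e ∈ E, ∀ p, IsWalk E s t p →
      (e ∈ edgesOf p → wt (wdec e) p = 5) ∧ (e ∉ edgesOf p → wt (wdec e) p = 6)) ∧
    (∀ E' ⊆ E, (∀ e ∈ E, ∃ p, IsWalk E' s t p ∧ wt (wdec e) p = 5) → E' = E) :=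
  stmt12_general s t A B hst hsA hsB htA htB hAB E hE wdec hwdec
end

section
/- In the lower-bound graph built from l full binary trees T_1, …, T_l of heights h_i = k − ∑_{j=2}^{i} j (each rooted at r_i, with s having an edge to each r_i), a set X of n extra vertices, and an edge from every leaf to every vertex of X, with weights w(s,r_i) = ∑_{j=2}^{i} j + i and all other edges of weight 1, the total number of edges equals l + ∑_{i=1}^{l}(2^{h_i+1} − 1) + (∑_{i=1}^{l} 2^{h_i})·n, which is at least (5/4)·2^k·n for all sufficiently large n (for fixed k ≥ 2 and l maximal with ∑_{j=2}^{l} j ≤ k). -/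
/-- `Ssum i = ∑_{j=2}^{i} j`. -/
def Ssum (i : ℕ) : ℕ := ∑ j ∈ Finset.Icc 2 i, j

/-- `hgt k i = k - ∑_{j=2}^{i} j`, the height of the `i`-th tree. -/
def hgt (k i : ℕ) : ℕ := k - Ssum i

/-- The edge count `l + ∑_{i=1}^{l}(2^{h_i+1} - 1) + (∑_{i=1}^{l} 2^{h_i})·n`
of the lower-bound graph is at least `(5/4)·2^k·n` for all sufficiently
large `n`. -/
theorem stmt17 (k l : ℕ) (hk : 2 ≤ k) (hl : 1 ≤ l)
    (hle : Ssum l ≤ k) (hmax : k < Ssum (l + 1)) :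
    ∃ n' : ℕ, ∀ n : ℕ, n' < n →
      (5 / 4 : ℚ) * 2 ^ k * n ≤
        (l : ℚ) + (∑ i ∈ Finset.Icc 1 l, ((2 ^ (hgt k i + 1) - 1 : ℕ) : ℚ)) +
          (∑ i ∈ Finset.Icc 1 l, (2 : ℚ) ^ hgt k i) * n := by
  have hl2 : 2 ≤ l := by
    by_contra h
    push_neg at h
    interval_cases l
    · have : Ssum (1 + 1) = 2 := by decide
      omega
  have h1 : hgt k 1 = k := by
    have : Ssum 1 = 0 := by decide
    simp [hgt, this]
  have h2 : hgt k 2 = k - 2 := by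
    have : Ssum 2 = 2 := by decide
    simp [hgt, this]
  have hsub : ({1, 2} : Finset ℕ) ⊆ Finset.Icc 1 l := by
    intro x hx
    simp at hx
    rcases hx with rfl | rfl <;> simp [Finset.mem_Icc] <;> omega
  have hsum : (2 : ℚ) ^ hgt k 1 + (2 : ℚ) ^ hgt k 2 ≤
      ∑ i ∈ Finset.Icc 1 l, (2 : ℚ) ^ hgt k i := by
    have := Finset.sum_le_sum_of_subset_of_nonneg hsub
      (fun i _ _ => by positivity : ∀ i ∈ Finset.Icc 1 l,
        i ∉ ({1, 2} : Finset ℕ) → (0 : ℚ) ≤ (2 : ℚ) ^ hgt k i)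
    simpa using this
  have hpow : (5 / 4 : ℚ) * 2 ^ k = (2 : ℚ) ^ k + (2 : ℚ) ^ (k - 2) := by
    have hk2 : (2 : ℚ) ^ k = (2 : ℚ) ^ (k - 2) * 2 ^ 2 := by
      rw [← pow_add]
      congr 1
      omega
    rw [hk2]
    ring
  have hcoef : (5 / 4 : ℚ) * 2 ^ k ≤ ∑ i ∈ Finset.Icc 1 l, (2 : ℚ) ^ hgt k i := by
    rw [hpow]
    rw [h1, h2] at hsum
    exact hsum
  refine ⟨0, fun n _ => ?_⟩
  have h3 : (5 / 4 : ℚ) * 2 ^ k * n ≤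
      (∑ i ∈ Finset.Icc 1 l, (2 : ℚ) ^ hgt k i) * n := by
    apply mul_le_mul_of_nonneg_right hcoef (by positivity)
  have h4 : (0 : ℚ) ≤ (l : ℚ) + ∑ i ∈ Finset.Icc 1 l, ((2 ^ (hgt k i + 1) - 1 : ℕ) : ℚ) := by
    positivity
  linarith
end

section
/- In the lower-bound graph of the size lower bound theorem, for any vertex t ∈ X and any s-t path P beginning with edge (s, r_i), the increment function I assigning I(s,r_j) = i + 1 − j for 1 ≤ j < i, I(e) = 1 for each tree edge (u,v) ∈ T_i with u on P but v not on P, and 0 otherwise, satisfies ∑_e I(e) ≤ k, and under w' = w + I the path P is the unique minimum-weight s-t path: w'(P) = w(P) while every other s-t path has weight at least k + i + 1 > w'(P). -/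
/-!
Every walk from `s` to `X` enters some tree `T_j` at its root and then needs exactly `h_j + 1`
more edges, each of weight at least `1`: tree edges go one level down and only leaves reach `X`.
Writing `S_j = ∑_{m=2}^{j} m`, under `w' = w + I` the walk `P` costs `S_i + i + h_i + 1 = k + i + 1`,
a walk through `T_j` with `j < i` costs `S_j + j + (i + 1 - j) + h_j + 1 = k + i + 2`, and one with
`j > i` at least `S_j + j + h_j + 1 ≥ k + j + 1`. A walk in `T_i` other than `P` leaves the
root-to-leaf path of `P` through an edge with increment `1`. Finally the root increments add up
to `∑_{j<i} (i + 1 - j) = S_i` and the tree increments to at most one per level above the leaf,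
so `∑ I ≤ S_i + h_i = k`.
-/

variable {V : Type*}

attribute [local instance] Classical.propDecidable

/-- Vertices of the lower-bound graph: the source `s`, the nodes of the `l`
full binary trees (tree `i` has nodes indexed heap-style by
`1 ≤ m < 2^(h_i+1)`, index `0` unused), and the `n` vertices of `X`. -/
abbrev Vlb (k l n : ℕ) :=
  Unit ⊕ ((Σ i : Fin l, Fin (2 ^ (hgt k (i.val + 1) + 1))) ⊕ Fin n)

def src (k l n : ℕ) : Vlb k l n := Sum.inl ()

def tnode (k l n : ℕ) (i : Fin l) (m : ℕ) : Vlb k l n :=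
  Sum.inr (Sum.inl ⟨i, ⟨m % 2 ^ (hgt k (i.val + 1) + 1),
    Nat.mod_lt _ (by positivity)⟩⟩)

def xnode (k l n : ℕ) (x : Fin n) : Vlb k l n := Sum.inr (Sum.inr x)

/-- Edges: `s → r_i` (heap index `1`), heap-style tree edges `m → 2m, 2m+1`,
and an edge from every leaf (heap index in `[2^{h_i}, 2^{h_i+1})`) to every
vertex of `X`. -/
def Elb (k l n : ℕ) : Set (Vlb k l n × Vlb k l n) :=
  {p | (∃ i : Fin l, p = (src k l n, tnode k l n i 1))
    ∨ (∃ (i : Fin l) (m m' : ℕ), 1 ≤ m ∧ m < 2 ^ hgt k (i.val + 1) ∧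
        (m' = 2 * m ∨ m' = 2 * m + 1) ∧ p = (tnode k l n i m, tnode k l n i m'))
    ∨ (∃ (i : Fin l) (m : ℕ) (x : Fin n), 2 ^ hgt k (i.val + 1) ≤ m ∧
        m < 2 ^ (hgt k (i.val + 1) + 1) ∧ p = (tnode k l n i m, xnode k l n x))}

/-- Weights: `w(s, r_i) = ∑_{j=2}^{i} j + i` (with `i` one-based), and all
other edges have weight `1`. -/
def wlb (k l n : ℕ) : Vlb k l n × Vlb k l n → ℕ := fun p =>
  match p with
  | (Sum.inl _, Sum.inr (Sum.inl ⟨i, _⟩)) => Ssum (i.val + 1) + (i.val + 1)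
  | _ => 1

/-- The increment function of the lower-bound argument: `I(s,r_j) = i + 1 - j`
for `j < i` (one-based), `I(e) = 1` for each tree edge of `T_i` leaving the
chosen root-to-leaf path (`m` an ancestor of `mleaf`, its child `m'` not), and
`0` elsewhere. -/
noncomputable def Ilb (k l n : ℕ) (i : Fin l) (mleaf : ℕ) :
    Vlb k l n × Vlb k l n → ℕ := fun p =>
  match p with
  | (Sum.inl _, Sum.inr (Sum.inl ⟨j, m⟩)) =>
      if m.val = 1 ∧ j.val < i.val then i.val + 1 - j.val else 0
  | (Sum.inr (Sum.inl ⟨j, m⟩), Sum.inr (Sum.inl ⟨j', m'⟩)) =>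
      if j = i ∧ j' = i ∧ (m'.val = 2 * m.val ∨ m'.val = 2 * m.val + 1) ∧
          (∃ d ≤ hgt k (i.val + 1), mleaf / 2 ^ d = m.val) ∧
          ¬(∃ d ≤ hgt k (i.val + 1), mleaf / 2 ^ d = m'.val)
      then 1 else 0
  | _ => 0



section Walks

variable {E : Set (V × V)} {a b c d : V} {r q : List V}

theorem isWalk_iff : IsWalk E a b q ↔
    q.head? = some a ∧ q.getLast? = some b ∧ q.IsChain (fun u v => (u, v) ∈ E) :=
  Iff.rfl

theorem IsWalk.exists_eq_cons (h : IsWalk E a b q) : ∃ r, q = a :: r := by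
  obtain ⟨hhead, -, -⟩ := h
  cases q with
  | nil => simp at hhead
  | cons x r => exact ⟨r, by simpa using hhead⟩

theorem isWalk_singleton : IsWalk E a b [c] ↔ c = a ∧ c = b := by
  simp [isWalk_iff, eq_comm]

theorem isWalk_cons_cons :
    IsWalk E a b (c :: d :: r) ↔ c = a ∧ (c, d) ∈ E ∧ IsWalk E d b (d :: r) := by
  simp only [isWalk_iff, List.head?_cons, Option.some.injEq, List.getLast?_cons_cons,
    List.isChain_cons_cons, true_and]
  tauto

theorem IsWalk.exists_cons_cons (h : IsWalk E a b q) (hab : a ≠ b) :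
    ∃ c r, q = a :: c :: r ∧ (a, c) ∈ E ∧ IsWalk E c b (c :: r) := by
  obtain ⟨r, rfl⟩ := h.exists_eq_cons
  cases r with
  | nil => exact absurd (isWalk_singleton.1 h).2 hab
  | cons c r => exact ⟨c, r, rfl, (isWalk_cons_cons.1 h).2⟩

theorem IsWalk.eq_singleton (h : IsWalk E a b q) (ha : ∀ c, (a, c) ∉ E) : q = [a] ∧ a = b := by
  obtain ⟨r, rfl⟩ := h.exists_eq_cons
  cases r with
  | nil => exact ⟨rfl, (isWalk_singleton.1 h).2⟩
  | cons c r => exact absurd (isWalk_cons_cons.1 h).2.1 (ha c)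

theorem IsWalk.cons (h : IsWalk E b c q) (hab : (a, b) ∈ E) : IsWalk E a c (a :: q) := by
  obtain ⟨r, rfl⟩ := h.exists_eq_cons
  exact isWalk_cons_cons.2 ⟨rfl, hab, h⟩

theorem wt_cons_cons {α : Type*} [AddCommMonoid α] (w : V × V → α) (a b : V) (r : List V) :
    wt w (a :: b :: r) = w (a, b) + wt w (b :: r) := by
  simp [wt, edgesOf]

theorem wt_cons_of_head?_eq {α : Type*} [AddCommMonoid α] (w : V × V → α) (a : V)
    (h : q.head? = some b) : wt w (a :: q) = w (a, b) + wt w q := by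
  obtain ⟨r, rfl⟩ : ∃ r, q = b :: r := by
    cases q with
    | nil => simp at h
    | cons c r => exact ⟨r, by simpa using h⟩
  exact wt_cons_cons w a b r

theorem wt_add {α : Type*} [AddCommMonoid α] (w v : V × V → α) (p : List V) :
    wt (fun e => w e + v e) p = wt w p + wt v p :=
  List.sum_map_add

end Walks

/-- Heap index `m` lies on level `d` of a heap-indexed binary tree (the root `1` is on level `0`). -/
def OnLevel (d m : ℕ) : Prop := 2 ^ d ≤ m ∧ m < 2 ^ (d + 1)

namespace OnLevel

variable {d e h m m' : ℕ}

theorem zero_iff : OnLevel 0 m ↔ m = 1 := by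
  simp only [OnLevel]
  omega

theorem unique (hd : OnLevel d m) (he : OnLevel e m) : d = e := by
  by_contra hne
  wlog hlt : d < e generalizing d e
  · exact this he hd (Ne.symm hne) (by omega)
  have : 2 ^ (d + 1) ≤ 2 ^ e := Nat.pow_le_pow_right two_pos hlt
  exact absurd (hd.2.trans_le this) (not_lt.2 he.1)

theorem child (hm : OnLevel d m) (hc : m' = 2 * m ∨ m' = 2 * m + 1) : OnLevel (d + 1) m' := by
  unfold OnLevel at *
  rw [pow_succ, pow_succ]
  omega

theorem div_two_pow (ha : OnLevel h m) (hd : d ≤ h) : OnLevel (h - d) (m / 2 ^ d) := by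
  have hpow : ∀ j, 2 ^ (h - d + j) * 2 ^ d = 2 ^ (h + j) := fun j => by
    rw [← pow_add]; congr 1; omega
  constructor
  · rw [Nat.le_div_iff_mul_le (by positivity), ← add_zero (h - d), hpow]
    exact ha.1
  · rw [Nat.div_lt_iff_lt_mul (by positivity), hpow]
    exact ha.2

theorem lt_two_pow_of_lt (hm : OnLevel d m) (hd : d < h) : m < 2 ^ h :=
  hm.2.trans_le (Nat.pow_le_pow_right two_pos hd)

theorem lt_two_pow_succ_of_le (hm : OnLevel d m) (hd : d ≤ h) : m < 2 ^ (h + 1) :=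
  hm.lt_two_pow_of_lt (by omega)

theorem one_le (hm : OnLevel d m) : 1 ≤ m :=
  (Nat.one_le_two_pow).trans hm.1

end OnLevel

theorem div_two_pow_eq_child (a c : ℕ) :
    a / 2 ^ c = 2 * (a / 2 ^ (c + 1)) ∨ a / 2 ^ c = 2 * (a / 2 ^ (c + 1)) + 1 := by
  rw [pow_succ, ← Nat.div_div_eq_div_mul]
  omega

section Graph

variable {k l n : ℕ}

theorem tnode_inj {j j' : Fin l} {m m' : ℕ}
    (hm : m < 2 ^ (hgt k (j.val + 1) + 1)) (hm' : m' < 2 ^ (hgt k (j'.val + 1) + 1))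
    (h : tnode k l n j m = tnode k l n j' m') : j = j' ∧ m = m' := by
  simp only [tnode, Sum.inr.injEq, Sum.inl.injEq, Sigma.mk.inj_iff] at h
  obtain ⟨rfl, h⟩ := h
  rw [heq_iff_eq, Fin.mk.injEq, Nat.mod_eq_of_lt hm, Nat.mod_eq_of_lt hm'] at h
  exact ⟨rfl, h⟩

theorem src_ne_tnode {j : Fin l} {m : ℕ} : src k l n ≠ tnode k l n j m := by
  simp [src, tnode]

theorem tnode_ne_xnode {j : Fin l} {m : ℕ} {x : Fin n} : tnode k l n j m ≠ xnode k l n x := by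
  simp [tnode, xnode]

theorem xnode_injective : Function.Injective (xnode k l n) := by
  intro x y h
  simpa [xnode] using h

theorem exists_tnode_of_mem_Elb_src {b : Vlb k l n} (he : (src k l n, b) ∈ Elb k l n) :
    ∃ j : Fin l, b = tnode k l n j 1 := by
  rcases he with ⟨j, hp⟩ | ⟨_, _, _, _, _, _, hp⟩ | ⟨_, _, _, _, _, hp⟩ <;>
    rw [Prod.mk.injEq] at hp
  · exact ⟨j, hp.2⟩
  all_goals exact absurd hp.1 src_ne_tnode

theorem notMem_Elb_xnode {x : Fin n} {b : Vlb k l n} : (xnode k l n x, b) ∉ Elb k l n := by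
  rintro (⟨_, hp⟩ | ⟨_, _, _, _, _, _, hp⟩ | ⟨_, _, _, _, _, hp⟩) <;> rw [Prod.mk.injEq] at hp
  · simp [xnode, src] at hp
  all_goals exact tnode_ne_xnode hp.1.symm

theorem mem_Elb_tnode {j : Fin l} {m : ℕ} {b : Vlb k l n}
    (hm : m < 2 ^ (hgt k (j.val + 1) + 1)) (he : (tnode k l n j m, b) ∈ Elb k l n) :
    (m < 2 ^ hgt k (j.val + 1) ∧ ∃ m', (m' = 2 * m ∨ m' = 2 * m + 1) ∧ b = tnode k l n j m') ∨
      (2 ^ hgt k (j.val + 1) ≤ m ∧ ∃ x, b = xnode k l n x) := by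
  rcases he with ⟨_, hp⟩ | ⟨_, _, m', -, h2, h3, hp⟩ | ⟨_, _, x, h1, h2, hp⟩ <;>
    rw [Prod.mk.injEq] at hp
  · exact absurd hp.1.symm src_ne_tnode
  · obtain ⟨rfl, rfl⟩ := tnode_inj hm (h2.trans (Nat.pow_lt_pow_succ one_lt_two)) hp.1
    exact Or.inl ⟨h2, m', h3, hp.2⟩
  · obtain ⟨rfl, rfl⟩ := tnode_inj hm h2 hp.1
    exact Or.inr ⟨h1, x, hp.2⟩

theorem wlb_src_tnode (j : Fin l) (m : ℕ) :
    wlb k l n (src k l n, tnode k l n j m) = Ssum (j.val + 1) + (j.val + 1) := rfl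

theorem wlb_tnode_tnode (j j' : Fin l) (m m' : ℕ) :
    wlb k l n (tnode k l n j m, tnode k l n j' m') = 1 := rfl

theorem wlb_tnode_xnode (j : Fin l) (m : ℕ) (x : Fin n) :
    wlb k l n (tnode k l n j m, xnode k l n x) = 1 := rfl

theorem one_le_wlb (e : Vlb k l n × Vlb k l n) : 1 ≤ wlb k l n e := by
  unfold wlb
  split <;> omega

variable {i : Fin l} {mleaf : ℕ}

theorem Ilb_src_tnode (j : Fin l) {m : ℕ} (hm : m < 2 ^ (hgt k (j.val + 1) + 1)) :
    Ilb k l n i mleaf (src k l n, tnode k l n j m) =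
      if m = 1 ∧ j.val < i.val then i.val + 1 - j.val else 0 := by
  change (if m % _ = 1 ∧ _ then _ else _) = _
  simp only [Nat.mod_eq_of_lt hm]

theorem Ilb_tnode_tnode (j j' : Fin l) {m m' : ℕ}
    (hm : m < 2 ^ (hgt k (j.val + 1) + 1)) (hm' : m' < 2 ^ (hgt k (j'.val + 1) + 1)) :
    Ilb k l n i mleaf (tnode k l n j m, tnode k l n j' m') =
      if j = i ∧ j' = i ∧ (m' = 2 * m ∨ m' = 2 * m + 1) ∧
          (∃ d ≤ hgt k (i.val + 1), mleaf / 2 ^ d = m) ∧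
          ¬(∃ d ≤ hgt k (i.val + 1), mleaf / 2 ^ d = m')
      then 1 else 0 := by
  change (if _ ∧ _ ∧ (m' % _ = 2 * (m % _) ∨ _) ∧ _ then _ else _) = _
  simp only [Nat.mod_eq_of_lt hm, Nat.mod_eq_of_lt hm']

theorem Ilb_tnode_xnode (j : Fin l) (m : ℕ) (x : Fin n) :
    Ilb k l n i mleaf (tnode k l n j m, xnode k l n x) = 0 := rfl

end Graph

section Descent

variable {k l n : ℕ} {i : Fin l} {mleaf : ℕ} {t : Fin n}

theorem le_wt_of_isWalk_tnode {w : Vlb k l n × Vlb k l n → ℕ} (hw : ∀ e, 1 ≤ w e) {j : Fin l} :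
    ∀ (c m : ℕ) (q : List (Vlb k l n)), c ≤ hgt k (j.val + 1) →
      OnLevel (hgt k (j.val + 1) - c) m →
      IsWalk (Elb k l n) (tnode k l n j m) (xnode k l n t) q → c + 1 ≤ wt w q := by
  intro c
  induction c with
  | zero =>
    intro m q _ _ hq
    obtain ⟨b, r, rfl, -, -⟩ := hq.exists_cons_cons tnode_ne_xnode
    rw [wt_cons_cons]
    have := hw (tnode k l n j m, b)
    omega
  | succ c ih =>
    intro m q hc hm hq
    obtain ⟨b, r, rfl, hedge, hq'⟩ := hq.exists_cons_cons tnode_ne_xnode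
    rcases mem_Elb_tnode (hm.lt_two_pow_succ_of_le (by omega)) hedge with
      ⟨-, m', hchild, rfl⟩ | ⟨hleaf, -⟩
    · have hlevel : hgt k (j.val + 1) - (c + 1) + 1 = hgt k (j.val + 1) - c := by omega
      have := ih m' _ (by omega) (hlevel ▸ hm.child hchild) hq'
      rw [wt_cons_cons]
      have := hw (tnode k l n j m, tnode k l n j m')
      omega
    · exact absurd hleaf (not_le.2 (hm.lt_two_pow_of_lt (by omega)))

variable (k l n i mleaf t) in
/-- The part of `P` from the ancestor `mleaf / 2 ^ c` of the leaf `mleaf` down to `t`. -/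
def descentPath (c : ℕ) : List (Vlb k l n) :=
  (List.range (c + 1)).map (fun dd => tnode k l n i (mleaf / 2 ^ (c - dd))) ++ [xnode k l n t]

theorem descentPath_zero :
    descentPath k l n i mleaf t 0 = [tnode k l n i mleaf, xnode k l n t] := by
  simp [descentPath]

theorem descentPath_succ (c : ℕ) :
    descentPath k l n i mleaf t (c + 1) =
      tnode k l n i (mleaf / 2 ^ (c + 1)) :: descentPath k l n i mleaf t c := by
  simp [descentPath, List.range_succ_eq_map, Function.comp_def]

theorem head?_descentPath (c : ℕ) :
    (descentPath k l n i mleaf t c).head? = some (tnode k l n i (mleaf / 2 ^ c)) := by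
  cases c <;> simp [descentPath_zero, descentPath_succ]

theorem wt_wlb_descentPath (c : ℕ) : wt (wlb k l n) (descentPath k l n i mleaf t c) = c + 1 := by
  induction c with
  | zero => rw [descentPath_zero, wt_cons_cons, wlb_tnode_xnode]; rfl
  | succ c ih =>
    rw [descentPath_succ, wt_cons_of_head?_eq _ _ (head?_descentPath c), wlb_tnode_tnode, ih]
    omega

theorem isWalk_descentPath (hleaf : OnLevel (hgt k (i.val + 1)) mleaf) {c : ℕ}
    (hc : c ≤ hgt k (i.val + 1)) :
    IsWalk (Elb k l n) (tnode k l n i (mleaf / 2 ^ c)) (xnode k l n t)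
      (descentPath k l n i mleaf t c) := by
  induction c with
  | zero =>
    rw [descentPath_zero, pow_zero, Nat.div_one, isWalk_cons_cons, isWalk_singleton]
    exact ⟨rfl, Or.inr (Or.inr ⟨i, mleaf, t, hleaf.1, hleaf.2, rfl⟩), rfl, rfl⟩
  | succ c ih =>
    obtain ⟨b, r, hdesc, -⟩ := (ih (by omega)).exists_cons_cons tnode_ne_xnode
    rw [descentPath_succ, hdesc, isWalk_cons_cons, ← hdesc]
    refine ⟨rfl, Or.inr (Or.inl ⟨i, _, _, ?_, ?_, ?_, rfl⟩), ih (by omega)⟩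
    · exact (hleaf.div_two_pow hc).one_le
    · exact (hleaf.div_two_pow hc).lt_two_pow_of_lt (by omega)
    · exact div_two_pow_eq_child mleaf c

theorem wt_Ilb_descentPath (hleaf : OnLevel (hgt k (i.val + 1)) mleaf) {c : ℕ}
    (hc : c ≤ hgt k (i.val + 1)) :
    wt (Ilb k l n i mleaf) (descentPath k l n i mleaf t c) = 0 := by
  induction c with
  | zero => rw [descentPath_zero, wt_cons_cons, Ilb_tnode_xnode]; rfl
  | succ c ih =>
    rw [descentPath_succ, wt_cons_of_head?_eq _ _ (head?_descentPath c), ih (by omega),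
      Ilb_tnode_tnode i i ((hleaf.div_two_pow hc).lt_two_pow_succ_of_le (by omega))
        ((hleaf.div_two_pow (d := c) (by omega)).lt_two_pow_succ_of_le (by omega)),
      if_neg fun h => h.2.2.2.2 ⟨c, by omega, rfl⟩]

theorem eq_descentPath_or_le_wt (hleaf : OnLevel (hgt k (i.val + 1)) mleaf) :
    ∀ (c : ℕ) (q : List (Vlb k l n)), c ≤ hgt k (i.val + 1) →
      IsWalk (Elb k l n) (tnode k l n i (mleaf / 2 ^ c)) (xnode k l n t) q →
      q = descentPath k l n i mleaf t c ∨
        c + 2 ≤ wt (fun e => wlb k l n e + Ilb k l n i mleaf e) q := by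
  have hw : ∀ e, 1 ≤ wlb k l n e + Ilb k l n i mleaf e :=
    fun e => (one_le_wlb e).trans (Nat.le_add_right _ _)
  intro c
  induction c with
  | zero =>
    intro q _ hq
    rw [pow_zero, Nat.div_one] at hq
    obtain ⟨b, r, rfl, hedge, hq'⟩ := hq.exists_cons_cons tnode_ne_xnode
    rcases mem_Elb_tnode hleaf.2 hedge with ⟨hlt, -⟩ | ⟨-, x, rfl⟩
    · exact absurd hleaf.1 (not_le.2 hlt)
    · obtain ⟨hr, hx⟩ := hq'.eq_singleton fun _ => notMem_Elb_xnode
      rw [List.cons.injEq] at hr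
      rw [hr.2, xnode_injective hx, descentPath_zero]
      exact Or.inl rfl
  | succ c ih =>
    intro q hc hq
    have hm := hleaf.div_two_pow hc
    obtain ⟨b, r, rfl, hedge, hq'⟩ := hq.exists_cons_cons tnode_ne_xnode
    rcases mem_Elb_tnode (hm.lt_two_pow_succ_of_le (by omega)) hedge with
      ⟨-, m', hchild, rfl⟩ | ⟨hleaf', -⟩
    swap
    · exact absurd hleaf' (not_le.2 (hm.lt_two_pow_of_lt (by omega)))
    have hlevel : hgt k (i.val + 1) - (c + 1) + 1 = hgt k (i.val + 1) - c := by omega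
    have hm' : OnLevel (hgt k (i.val + 1) - c) m' := hlevel ▸ hm.child hchild
    rw [wt_cons_cons]
    by_cases hanc : m' = mleaf / 2 ^ c
    · subst hanc
      rcases ih _ (by omega) hq' with htail | htail
      · exact Or.inl (by rw [descentPath_succ, htail])
      · have := hw (tnode k l n i (mleaf / 2 ^ (c + 1)), tnode k l n i (mleaf / 2 ^ c))
        omega
    -- `m'` leaves the path to the leaf, so the edge carries the increment `1`.
    · have hnot : ¬∃ d ≤ hgt k (i.val + 1), mleaf / 2 ^ d = m' := by
        rintro ⟨d, hd, rfl⟩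
        have := (hleaf.div_two_pow hd).unique hm'
        exact hanc (by congr 2; omega)
      have hI := Ilb_tnode_tnode (k := k) (n := n) (i := i) (mleaf := mleaf) i i
        (hm.lt_two_pow_succ_of_le (by omega)) (hm'.lt_two_pow_succ_of_le (by omega))
      rw [if_pos ⟨rfl, rfl, hchild, ⟨c + 1, hc, rfl⟩, hnot⟩] at hI
      have := le_wt_of_isWalk_tnode hw c m' _ (Nat.le_of_succ_le hc) hm' hq'
      rw [wlb_tnode_tnode, hI]
      omega

end Descent

theorem Ssum_mono {a b : ℕ} (h : a ≤ b) : Ssum a ≤ Ssum b :=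
  Finset.sum_le_sum_of_subset (Finset.Icc_subset_Icc_right h)

theorem Ssum_succ_succ (N : ℕ) : Ssum (N + 2) = Ssum (N + 1) + (N + 2) :=
  Finset.sum_Icc_succ_top (by omega) _

theorem sum_range_sub_eq_Ssum (N : ℕ) : ∑ j ∈ Finset.range N, (N + 1 - j) = Ssum (N + 1) := by
  induction N with
  | zero => rfl
  | succ N ih =>
    have hshift : ∀ j ∈ Finset.range N, N + 1 + 1 - j = (N + 1 - j) + 1 := by
      intro j hj
      rw [Finset.mem_range] at hj
      omega
    rw [Finset.sum_range_succ, Finset.sum_congr rfl hshift, Finset.sum_add_distrib, ih,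
      Finset.sum_const, Finset.card_range, Ssum_succ_succ, smul_eq_mul, mul_one]
    omega

abbrev TreeNode (k l : ℕ) := Σ j : Fin l, Fin (2 ^ (hgt k (j.val + 1) + 1))

section IncrementSum

variable {k l n : ℕ} {i : Fin l} {mleaf : ℕ}

theorem sum_Ilb_eq :
    ∑ e : Vlb k l n × Vlb k l n, Ilb k l n i mleaf e =
      ∑ σ : TreeNode k l, Ilb k l n i mleaf (src k l n, Sum.inr (Sum.inl σ)) +
        ∑ σ : TreeNode k l, ∑ σ' : TreeNode k l,
          Ilb k l n i mleaf (Sum.inr (Sum.inl σ), Sum.inr (Sum.inl σ')) := by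
  simp [Fintype.sum_prod_type, Fintype.sum_sum_type, Ilb, src]

theorem sum_Ilb_src : ∑ σ : TreeNode k l, Ilb k l n i mleaf (src k l n, Sum.inr (Sum.inl σ)) =
    Ssum (i.val + 1) := by
  have hrow : ∀ j : Fin l, ∑ m, Ilb k l n i mleaf (src k l n, Sum.inr (Sum.inl ⟨j, m⟩)) =
      if j.val < i.val then i.val + 1 - j.val else 0 := by
    intro j
    have hroot : 1 < 2 ^ (hgt k (j.val + 1) + 1) := Nat.one_lt_two_pow (Nat.succ_ne_zero _)
    rw [Finset.sum_eq_single_of_mem ⟨1, hroot⟩ (Finset.mem_univ _)]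
    · exact if_congr (and_iff_right rfl) rfl rfl
    · intro m _ hm
      exact if_neg fun h => hm (Fin.ext h.1)
  have hsupp : ∀ j ∈ Finset.range l, j ∉ Finset.range i.val →
      (if j < i.val then i.val + 1 - j else 0) = 0 := by
    intro j _ hj
    exact if_neg (by simpa using hj)
  rw [Fintype.sum_sigma, Fintype.sum_congr _ _ hrow,
    Fin.sum_univ_eq_sum_range (fun j => if j < i.val then i.val + 1 - j else 0),
    ← Finset.sum_subset (Finset.range_subset_range.2 i.isLt.le) hsupp,
    Finset.sum_congr rfl fun j hj => if_pos (Finset.mem_range.1 hj), sum_range_sub_eq_Ssum]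

theorem sum_Ilb_tree_le (hleaf : OnLevel (hgt k (i.val + 1)) mleaf) :
    ∑ σ : TreeNode k l, ∑ σ' : TreeNode k l,
        Ilb k l n i mleaf (Sum.inr (Sum.inl σ), Sum.inr (Sum.inl σ')) ≤ hgt k (i.val + 1) := by
  set f : TreeNode k l × TreeNode k l → ℕ :=
    fun p => Ilb k l n i mleaf (Sum.inr (Sum.inl p.1), Sum.inr (Sum.inl p.2))
  set S := Finset.univ.filter fun p => f p ≠ 0
  have hmem : ∀ {j m j' m'}, ((⟨j, m⟩, ⟨j', m'⟩) : TreeNode k l × TreeNode k l) ∈ S →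
      j = i ∧ j' = i ∧ (m'.val = 2 * m.val ∨ m'.val = 2 * m.val + 1) ∧
      (∃ d ≤ hgt k (i.val + 1), mleaf / 2 ^ d = m.val) ∧
      ¬∃ d ≤ hgt k (i.val + 1), mleaf / 2 ^ d = m'.val :=
    fun hp => (ite_ne_right_iff.1 (Finset.mem_filter.1 hp).2).1
  -- A branching edge is determined by its tail, an ancestor of `mleaf` other than `mleaf`.
  have hmaps : Set.MapsTo (fun p : TreeNode k l × TreeNode k l => p.1.2.val) S
      ((Finset.Icc 1 (hgt k (i.val + 1))).image fun d => mleaf / 2 ^ d) := by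
    rintro ⟨⟨j, m⟩, ⟨j', m'⟩⟩ hp
    obtain ⟨rfl, rfl, hchild, ⟨d, hd, hpar⟩, -⟩ := hmem hp
    refine Finset.mem_image.2 ⟨d, Finset.mem_Icc.2 ⟨Nat.one_le_iff_ne_zero.2 ?_, hd⟩, hpar⟩
    rintro rfl
    rw [pow_zero, Nat.div_one] at hpar
    have := m'.isLt
    have := hleaf.1
    have := pow_succ' 2 (hgt k (j'.val + 1))
    omega
  have hinj : Set.InjOn (fun p : TreeNode k l × TreeNode k l => p.1.2.val) S := by
    rintro ⟨⟨j₁, m₁⟩, ⟨j₁', m₁'⟩⟩ hp ⟨⟨j₂, m₂⟩, ⟨j₂', m₂'⟩⟩ hq (hpq : m₁.val = m₂.val)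
    obtain ⟨d, hd, hpar⟩ := Finset.mem_image.1 (hmaps hp)
    obtain ⟨hd1, hd⟩ := Finset.mem_Icc.1 hd
    obtain ⟨rfl, rfl, hc₁, -, hn₁⟩ := hmem hp
    obtain ⟨rfl, rfl, hc₂, -, hn₂⟩ := hmem hq
    obtain ⟨d, rfl⟩ := Nat.exists_eq_add_of_le' hd1
    have hanc := div_two_pow_eq_child mleaf d
    have h₁ : m₁'.val ≠ mleaf / 2 ^ d := fun h => hn₁ ⟨d, by omega, h.symm⟩
    have h₂ : m₂'.val ≠ mleaf / 2 ^ d := fun h => hn₂ ⟨d, by omega, h.symm⟩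
    have : m₁'.val = m₂'.val := by simp only at hpar; omega
    simp only [Prod.mk.injEq, Sigma.mk.inj_iff, heq_eq_eq, true_and]
    exact ⟨Fin.ext hpq, Fin.ext this⟩
  calc ∑ σ, ∑ σ', f (σ, σ') = ∑ p ∈ S, f p := by
        rw [← Fintype.sum_prod_type', Finset.sum_filter_ne_zero]
    _ ≤ S.card • 1 := Finset.sum_le_card_nsmul _ _ _ fun p _ => by
        change (if _ then 1 else 0) ≤ 1
        split <;> omega
    _ ≤ ((Finset.Icc 1 (hgt k (i.val + 1))).image fun d => mleaf / 2 ^ d).card := by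
        rw [smul_eq_mul, mul_one]
        exact Finset.card_le_card_of_injOn _ hmaps hinj
    _ ≤ hgt k (i.val + 1) := Finset.card_image_le.trans (by simp)

theorem sum_Ilb_le (hk : Ssum (i.val + 1) ≤ k) (hleaf : OnLevel (hgt k (i.val + 1)) mleaf) :
    ∑ e : Vlb k l n × Vlb k l n, Ilb k l n i mleaf e ≤ k := by
  rw [sum_Ilb_eq, sum_Ilb_src]
  calc _ ≤ Ssum (i.val + 1) + hgt k (i.val + 1) := Nat.add_le_add_left (sum_Ilb_tree_le hleaf) _
    _ = k := by unfold hgt; omega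

end IncrementSum

theorem add_le_wt_of_isWalk_ne {k l n : ℕ} {i : Fin l} {mleaf : ℕ} {t : Fin n}
    {q : List (Vlb k l n)} (hle : Ssum l ≤ k) (hleaf : OnLevel (hgt k (i.val + 1)) mleaf)
    (hq : IsWalk (Elb k l n) (src k l n) (xnode k l n t) q)
    (hne : q ≠ src k l n :: descentPath k l n i mleaf t (hgt k (i.val + 1))) :
    k + (i.val + 1) + 2 ≤ wt (fun e => wlb k l n e + Ilb k l n i mleaf e) q := by
  have hw : ∀ e, 1 ≤ wlb k l n e + Ilb k l n i mleaf e :=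
    fun e => (one_le_wlb e).trans (Nat.le_add_right _ _)
  obtain ⟨b, r, rfl, hedge, hq'⟩ := hq.exists_cons_cons (by simp [src, xnode])
  obtain ⟨j, rfl⟩ := exists_tnode_of_mem_Elb_src hedge
  have htail := le_wt_of_isWalk_tnode hw _ 1 _ le_rfl
    (by rw [Nat.sub_self, OnLevel.zero_iff]) hq'
  rw [wt_cons_cons, wlb_src_tnode, Ilb_src_tnode j (Nat.one_lt_two_pow (Nat.succ_ne_zero _))]
  unfold hgt at htail
  rcases lt_trichotomy j.val i.val with hlt | heq | hlt'
  · have := Ssum_mono (show j.val + 1 ≤ l by omega)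
    rw [if_pos ⟨rfl, hlt⟩]
    omega
  · obtain rfl : j = i := Fin.ext heq
    have hroot := OnLevel.zero_iff.1 (Nat.sub_self _ ▸ hleaf.div_two_pow le_rfl)
    have h := eq_descentPath_or_le_wt hleaf _ _ le_rfl (hroot ▸ hq')
    rw [hroot] at h
    rcases h with htail' | htail'
    · exact absurd (by rw [← htail']) hne
    · have := Ssum_mono (show j.val + 1 ≤ l by omega)
      rw [if_neg (by omega)]
      unfold hgt at htail'
      omega
  · rw [if_neg (by omega)]
    omega

theorem stmt18_general (k l n : ℕ) (hle : Ssum l ≤ k)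
    (i : Fin l) (mleaf : ℕ)
    (hm1 : 2 ^ hgt k (i.val + 1) ≤ mleaf) (hm2 : mleaf < 2 ^ (hgt k (i.val + 1) + 1))
    (t : Fin n)
    (P : List (Vlb k l n))
    (hP : P = src k l n ::
      ((List.range (hgt k (i.val + 1) + 1)).map fun dd =>
        tnode k l n i (mleaf / 2 ^ (hgt k (i.val + 1) - dd))) ++ [xnode k l n t])
    (w' : Vlb k l n × Vlb k l n → ℕ)
    (hw' : w' = fun p => wlb k l n p + Ilb k l n i mleaf p) :
    (∑ p : Vlb k l n × Vlb k l n, Ilb k l n i mleaf p ≤ k) ∧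
    IsWalk (Elb k l n) (src k l n) (xnode k l n t) P ∧
    wt w' P = wt (wlb k l n) P ∧
    (∀ q, IsWalk (Elb k l n) (src k l n) (xnode k l n t) q → q ≠ P →
      k + (i.val + 1) + 1 ≤ wt w' q ∧ wt w' P < wt w' q) := by
  subst hw'
  have hleaf : OnLevel (hgt k (i.val + 1)) mleaf := ⟨hm1, hm2⟩
  have hPdesc : P = src k l n :: descentPath k l n i mleaf t (hgt k (i.val + 1)) := hP
  have hroot := OnLevel.zero_iff.1 (Nat.sub_self _ ▸ hleaf.div_two_pow le_rfl)
  have hk : Ssum (i.val + 1) ≤ k := (Ssum_mono (by omega)).trans hle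
  have hdesc := isWalk_descentPath (t := t) hleaf le_rfl
  rw [hroot] at hdesc
  have hIP : wt (Ilb k l n i mleaf) P = 0 := by
    rw [hPdesc, wt_cons_of_head?_eq _ _ (head?_descentPath _), wt_Ilb_descentPath hleaf le_rfl,
      hroot, Ilb_src_tnode i (Nat.one_lt_two_pow (Nat.succ_ne_zero _)), if_neg (by omega)]
  have hwP : wt (wlb k l n) P = k + (i.val + 1) + 1 := by
    rw [hPdesc, wt_cons_of_head?_eq _ _ (head?_descentPath _), wt_wlb_descentPath, wlb_src_tnode]
    unfold hgt
    omega
  refine ⟨sum_Ilb_le hk hleaf, hPdesc ▸ hdesc.cons (Or.inl ⟨i, rfl⟩),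
    by rw [wt_add, hIP, add_zero], fun q hq hne => ?_⟩
  have := add_le_wt_of_isWalk_ne hle hleaf hq (hPdesc ▸ hne)
  have hw'P : wt (fun e => wlb k l n e + Ilb k l n i mleaf e) P = k + (i.val + 1) + 1 := by
    rw [wt_add, hIP, hwP, add_zero]
  omega

/-- In the lower-bound graph, for any `t ∈ X` and the `s`-`t` path `P` through
tree `T_i` ending at leaf `mleaf`, the increment `I` has total at most `k`,
does not change the weight of `P`, and makes `P` the unique minimum-weight
`s`-`t` path, every other `s`-`t` path having weight at least `k + i + 1`. -/
theorem stmt18 (k l n : ℕ) (hk : 2 ≤ k) (hl : 1 ≤ l)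
    (hle : Ssum l ≤ k) (hmax : k < Ssum (l + 1))
    (i : Fin l) (mleaf : ℕ)
    (hm1 : 2 ^ hgt k (i.val + 1) ≤ mleaf) (hm2 : mleaf < 2 ^ (hgt k (i.val + 1) + 1))
    (t : Fin n)
    (P : List (Vlb k l n))
    (hP : P = src k l n ::
      ((List.range (hgt k (i.val + 1) + 1)).map fun dd =>
        tnode k l n i (mleaf / 2 ^ (hgt k (i.val + 1) - dd))) ++ [xnode k l n t])
    (w' : Vlb k l n × Vlb k l n → ℕ)
    (hw' : w' = fun p => wlb k l n p + Ilb k l n i mleaf p) :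
    (∑ p : Vlb k l n × Vlb k l n, Ilb k l n i mleaf p ≤ k) ∧
    IsWalk (Elb k l n) (src k l n) (xnode k l n t) P ∧
    wt w' P = wt (wlb k l n) P ∧
    (∀ q, IsWalk (Elb k l n) (src k l n) (xnode k l n t) q → q ≠ P →
      k + (i.val + 1) + 1 ≤ wt w' q ∧ wt w' P < wt w' q) :=
  stmt18_general k l n hle i mleaf hm1 hm2 t P hP w' hw'
end
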